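/- Let q ≥ 8 be an even prime power and μ ∈ F_q^* with μ ≠ 1. Then exactly two points of the line ℓ_μ lie on tangent lines of the twisted cubic: the point spanned by (1,0,1,0), which lies on T₁, and the point spanned by (0,μ,0,1), which lies on T_s where s ∈ F_q satisfies s² = μ; no other point of ℓ_μ lies on any tangent line T_t, t ∈ F_q ∪ {∞}. -/

import Mathlib

/-- The tangent line `T_τ` of the twisted cubic, as a `2`-dimensional subspace of `F_q⁴`:
`T_t` is spanned by `(t³,t²,t,1)` and `(3t²,2t,1,0)` for `t ∈ F_q`, and `T_∞` is spanned
by `(1,0,0,0)` and `(0,1,0,0)`. -/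
noncomputable def tang {F : Type*} [Field F] : Option F → Submodule F (Fin 4 → F)
  | none => Submodule.span F {![1, 0, 0, 0], ![0, 1, 0, 0]}
  | some t => Submodule.span F {![t ^ 3, t ^ 2, t, 1], ![3 * t ^ 2, 2 * t, 1, 0]}

/-!
In characteristic two the tangent `T_t` is spanned by `(t³,t²,t,1)` and `(t²,0,1,0)`.
Writing `(γ,μ,γ,1) = (t³,t²,t,1) + b (t²,0,1,0)` forces `t² = μ` and `b = γ + t`, and then the
first coordinate reads `γ = t³ + t²(γ + t) = μγ`; as `μ ≠ 1` this gives `γ = 0`. The point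
`(1,0,1,0)` is the second spanning vector of `T_1`, and `(0,μ,0,1) = P(s) + s (s²,0,1,0)` for
`s² = μ`, which exists because squaring is bijective on a finite field of characteristic two.
-/

open Submodule

section TangentsMeetingLine

variable {F : Type*} [Field F]

/-- The points of the line `ℓ_μ`. -/
def linePoints (μ : F) : Set (Submodule F (Fin 4 → F)) :=
  {p | p = span F {![1, 0, 1, 0]} ∨ ∃ γ : F, p = span F {![γ, μ, γ, 1]}}

lemma span_ne_span_one_zero_one_zero (μ : F) :
    span F {![(0 : F), μ, 0, 1]} ≠ span F {![1, 0, 1, 0]} := by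
  intro h
  obtain ⟨c, hc⟩ := mem_span_singleton.mp (h ▸ mem_span_singleton_self ![(0 : F), μ, 0, 1])
  simpa using congrFun hc 3

lemma not_mem_tang_none {x : Fin 4 → F} (hx : x 3 ≠ 0) : x ∉ tang none := by
  intro hmem
  obtain ⟨a, b, h⟩ := mem_span_pair.mp hmem
  exact hx (by simpa using (congrFun h 3).symm)

section CharTwo

variable [CharP F 2]

lemma span_one_zero_one_zero_le_tang_one : span F {![1, 0, 1, 0]} ≤ tang (some (1 : F)) := by
  have h2 : (2 : F) = 0 := CharTwo.two_eq_zero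
  rw [span_singleton_le_iff_mem]
  refine mem_span_pair.mpr ⟨0, 1, ?_⟩
  simp only [Matrix.smul_cons, smul_eq_mul, Matrix.smul_empty, Matrix.cons_add_cons,
    Matrix.empty_add_empty, Matrix.vecCons_inj, and_true]
  refine ⟨?_, ?_, ?_, ?_⟩
  · linear_combination h2
  · linear_combination h2
  · ring
  · ring

lemma span_le_tang_of_sq_eq {μ s : F} (hs : s ^ 2 = μ) :
    span F {![0, μ, 0, 1]} ≤ tang (some s) := by
  have h2 : (2 : F) = 0 := CharTwo.two_eq_zero
  rw [span_singleton_le_iff_mem]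
  refine mem_span_pair.mpr ⟨1, s, ?_⟩
  simp only [Matrix.smul_cons, smul_eq_mul, Matrix.smul_empty, Matrix.cons_add_cons,
    Matrix.empty_add_empty, Matrix.vecCons_inj, and_true]
  refine ⟨?_, ?_, ?_, ?_⟩
  · linear_combination 2 * s ^ 3 * h2
  · linear_combination hs + s ^ 2 * h2
  · linear_combination s * h2
  · ring

lemma eq_zero_of_mem_tang_some {μ γ t : F} (hμ1 : μ ≠ 1)
    (hmem : ![γ, μ, γ, 1] ∈ tang (some t)) : γ = 0 := by
  have h2 : (2 : F) = 0 := CharTwo.two_eq_zero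
  obtain ⟨a, b, h⟩ := mem_span_pair.mp hmem
  simp only [Matrix.smul_cons, smul_eq_mul, Matrix.smul_empty, Matrix.cons_add_cons,
    Matrix.empty_add_empty, Matrix.vecCons_inj, and_true] at h
  obtain ⟨h0, h1, hc2, hc3⟩ := h
  have ha : a = 1 := by linear_combination hc3
  have hb : b = γ - t := by linear_combination hc2 - t * ha
  have ht : t ^ 2 = μ := by linear_combination h1 - t ^ 2 * ha - b * t * h2
  have hγ : γ * (μ - 1) = 0 := by
    linear_combination h0 - t ^ 3 * ha - 3 * t ^ 2 * hb - (γ * t ^ 2 - t ^ 3) * h2 - γ * ht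
  exact (mul_eq_zero.mp hγ).resolve_right (sub_ne_zero.mpr hμ1)

lemma eq_zero_of_span_le_tang {μ γ : F} (hμ1 : μ ≠ 1) {τ : Option F}
    (hle : span F {![γ, μ, γ, 1]} ≤ tang τ) : γ = 0 := by
  rw [span_singleton_le_iff_mem] at hle
  cases τ with
  | none => exact absurd hle (not_mem_tang_none (by simp))
  | some t => exact eq_zero_of_mem_tang_some hμ1 hle

lemma linePoints_sep_le_tang {μ s : F} (hμ1 : μ ≠ 1) (hs : s ^ 2 = μ) :
    {p ∈ linePoints μ | ∃ τ : Option F, p ≤ tang τ} =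
      {span F {![1, 0, 1, 0]}, span F {![(0 : F), μ, 0, 1]}} := by
  ext p
  constructor
  · rintro ⟨hp | ⟨γ, rfl⟩, τ, hle⟩
    · exact Or.inl hp
    · obtain rfl := eq_zero_of_span_le_tang hμ1 hle
      exact Or.inr rfl
  · rintro (rfl | rfl)
    · exact ⟨Or.inl rfl, some 1, span_one_zero_one_zero_le_tang_one⟩
    · exact ⟨Or.inr ⟨0, rfl⟩, some s, span_le_tang_of_sq_eq hs⟩

end CharTwo

end TangentsMeetingLine

theorem stmt11_general (q : ℕ) (heven : Even q)
    (F : Type*) [Field F] [Fintype F] (hcard : Fintype.card F = q)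
    (μ : F) (hμ1 : μ ≠ 1) :
    let linePts : Set (Submodule F (Fin 4 → F)) :=
      {p | p = Submodule.span F {![1, 0, 1, 0]} ∨
        ∃ γ : F, p = Submodule.span F {![γ, μ, γ, 1]}}
    ∃ s : F, s ^ 2 = μ ∧
      (Submodule.span F {![1, 0, 1, 0]} : Submodule F (Fin 4 → F)) ≤ tang (some 1) ∧
      (Submodule.span F {![0, μ, 0, 1]} : Submodule F (Fin 4 → F)) ≤ tang (some s) ∧
      (Submodule.span F {![(0 : F), μ, 0, 1]} : Submodule F (Fin 4 → F))
        ≠ Submodule.span F {![1, 0, 1, 0]} ∧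
      Set.ncard {p ∈ linePts | ∃ τ : Option F, p ≤ tang τ} = 2 ∧
      ∀ p ∈ linePts, (∃ τ : Option F, p ≤ tang τ) →
        p = Submodule.span F {![1, 0, 1, 0]} ∨ p = Submodule.span F {![(0 : F), μ, 0, 1]} := by
  intro linePts
  have hchar : ringChar F = 2 :=
    FiniteField.even_card_iff_char_two.mpr (Nat.even_iff.mp (hcard ▸ heven))
  have : CharP F 2 := ringChar.of_eq hchar
  obtain ⟨s, hs⟩ := FiniteField.isSquare_of_char_two hchar μ
  have hs2 : s ^ 2 = μ := by rw [hs, sq]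
  have hne := span_ne_span_one_zero_one_zero μ
  have hset := linePoints_sep_le_tang hμ1 hs2
  refine ⟨s, hs2, span_one_zero_one_zero_le_tang_one, span_le_tang_of_sq_eq hs2, hne, ?_, ?_⟩
  · rw [show linePts = linePoints μ from rfl, hset]
    exact Set.ncard_pair hne.symm
  · intro p hp hτ
    have hmem : p ∈ {p ∈ linePoints μ | ∃ τ : Option F, p ≤ tang τ} := ⟨hp, hτ⟩
    rwa [hset] at hmem

/-- Let `q ≥ 8` be an even prime power and `μ ∈ F_q^*`, `μ ≠ 1`. Then
exactly two points of the line `ℓ_μ` lie on tangent lines of the twisted cubic: the point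
spanned by `(1,0,1,0)`, which lies on `T₁`, and the point spanned by `(0,μ,0,1)`, which
lies on `T_s` where `s² = μ`; no other point of `ℓ_μ` lies on any tangent `T_τ`,
`τ ∈ F_q ∪ {∞}`. -/
theorem stmt11 (q : ℕ) (hq8 : 8 ≤ q) (heven : Even q)
    (F : Type*) [Field F] [Fintype F] (hcard : Fintype.card F = q)
    (μ : F) (hμ0 : μ ≠ 0) (hμ1 : μ ≠ 1) :
    let linePts : Set (Submodule F (Fin 4 → F)) :=
      {p | p = Submodule.span F {![1, 0, 1, 0]} ∨
        ∃ γ : F, p = Submodule.span F {![γ, μ, γ, 1]}}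
    ∃ s : F, s ^ 2 = μ ∧
      (Submodule.span F {![1, 0, 1, 0]} : Submodule F (Fin 4 → F)) ≤ tang (some 1) ∧
      (Submodule.span F {![0, μ, 0, 1]} : Submodule F (Fin 4 → F)) ≤ tang (some s) ∧
      (Submodule.span F {![(0 : F), μ, 0, 1]} : Submodule F (Fin 4 → F))
        ≠ Submodule.span F {![1, 0, 1, 0]} ∧
      Set.ncard {p ∈ linePts | ∃ τ : Option F, p ≤ tang τ} = 2 ∧
      ∀ p ∈ linePts, (∃ τ : Option F, p ≤ tang τ) →
        p = Submodule.span F {![1, 0, 1, 0]} ∨ p = Submodule.span F {![(0 : F), μ, 0, 1]} :=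
  stmt11_general q heven F hcard μ hμ1
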